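/- Let u : ℝ → ℂ be continuously differentiable with compact support. Then for every R > 0, sup_{r > R} |u(r)|² ≤ 2 R^{-2} ‖r·u'‖_{L²(R,∞)} · ‖r·u‖_{L²(R,∞)}. -/

import Mathlib

/-!
Since `u` vanishes at infinity, `‖u r‖² = -∫_r^∞ (‖u‖²)' ≤ 2 ∫_r^∞ ‖u‖ ‖u'‖`. For `r > R` this is
at most `2 R⁻² ∫_R^∞ (t ‖u'‖)(t ‖u‖)`, and Cauchy–Schwarz finishes.
-/

open MeasureTheory Set

theorem integral_mul_le_sqrt_integral_sq_mul_sqrt_integral_sq {α : Type*} [MeasurableSpace α]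
    {μ : Measure α} {f g : α → ℝ} (hf₀ : 0 ≤ᵐ[μ] f) (hg₀ : 0 ≤ᵐ[μ] g)
    (hf : MemLp f 2 μ) (hg : MemLp g 2 μ) :
    ∫ a, f a * g a ∂μ ≤ √(∫ a, f a ^ 2 ∂μ) * √(∫ a, g a ^ 2 ∂μ) := by
  have h := integral_mul_le_Lp_mul_Lq_of_nonneg Real.HolderConjugate.two_two hf₀ hg₀
    (by simpa using hf) (by simpa using hg)
  simpa only [Real.rpow_two, Real.sqrt_eq_rpow] using h

theorem norm_sq_le_two_mul_integral_Ioi_norm_mul_norm_deriv {E : Type*}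
    [NormedAddCommGroup E] [InnerProductSpace ℝ E] {f : ℝ → E} (hf : ContDiff ℝ 1 f)
    (hsupp : HasCompactSupport f) (r : ℝ) :
    ‖f r‖ ^ 2 ≤ 2 * ∫ t in Ioi r, ‖f t‖ * ‖deriv f t‖ := by
  have hg : ContDiff ℝ 1 (‖f ·‖ ^ 2) := hf.norm_sq ℝ
  have hg_supp : HasCompactSupport (‖f ·‖ ^ 2) :=
    hsupp.comp_left (g := fun x : E => ‖x‖ ^ 2) (by simp)
  have hderiv : ∀ t, deriv (‖f ·‖ ^ 2) t = 2 * inner ℝ (f t) (deriv f t) := fun t =>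
    (hf.differentiable one_ne_zero t).hasDerivAt.norm_sq.deriv
  have hderiv_int : Integrable (deriv (‖f ·‖ ^ 2)) :=
    (hg.continuous_deriv le_rfl).integrable_of_hasCompactSupport hg_supp.deriv
  have hbound_int : Integrable fun t => ‖f t‖ * ‖deriv f t‖ :=
    (hf.continuous.norm.mul (hf.continuous_deriv le_rfl).norm).integrable_of_hasCompactSupport
      hsupp.norm.mul_right
  calc ‖f r‖ ^ 2 = ∫ t in Ioi r, -deriv (‖f ·‖ ^ 2) t := by
        rw [integral_neg, hg_supp.integral_Ioi_deriv_eq hg r, neg_neg]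
    _ ≤ ∫ t in Ioi r, 2 * (‖f t‖ * ‖deriv f t‖) := by
        refine integral_mono hderiv_int.neg.integrableOn
          (hbound_int.const_mul 2).integrableOn fun t => ?_
        rw [hderiv]
        linarith [neg_abs_le (inner ℝ (f t) (deriv f t)),
          abs_real_inner_le_norm (f t) (deriv f t)]
    _ = 2 * ∫ t in Ioi r, ‖f t‖ * ‖deriv f t‖ := integral_const_mul _ _

theorem setIntegral_Ioi_le_setIntegral_Ioi_sq_mul_div_sq {h : ℝ → ℝ} {R r : ℝ} (hR : 0 < R)
    (hRr : R ≤ r) (h₀ : ∀ t ∈ Ioi R, 0 ≤ h t) (hint : IntegrableOn h (Ioi R))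
    (hint_sq : IntegrableOn (fun t => t ^ 2 * h t) (Ioi R)) :
    ∫ t in Ioi r, h t ≤ (∫ t in Ioi R, t ^ 2 * h t) / R ^ 2 := by
  calc ∫ t in Ioi r, h t ≤ ∫ t in Ioi R, h t :=
        setIntegral_mono_set hint ((ae_restrict_iff' measurableSet_Ioi).2 (.of_forall h₀))
          (Ioi_subset_Ioi hRr).eventuallyLE
    _ ≤ ∫ t in Ioi R, t ^ 2 * h t / R ^ 2 := by
        refine setIntegral_mono_on hint (hint_sq.div_const _) measurableSet_Ioi fun t ht => ?_
        rw [le_div_iff₀ (by positivity)]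
        have : R ^ 2 ≤ t ^ 2 := pow_le_pow_left₀ hR.le (le_of_lt ht) 2
        nlinarith [h₀ t ht]
    _ = (∫ t in Ioi R, t ^ 2 * h t) / R ^ 2 := integral_div _ _

/-- For `u : ℝ → ℂ` continuously differentiable with compact support and `R > 0`,
`sup_{r > R} |u(r)|² ≤ 2 R^{-2} ‖r·u'‖_{L²(R,∞)} ‖r·u‖_{L²(R,∞)}`. -/
theorem stmt6 (u : ℝ → ℂ) (hu : ContDiff ℝ 1 u) (hsupp : HasCompactSupport u)
    (R : ℝ) (hR : 0 < R) :
    ∀ r ∈ Set.Ioi R, ‖u r‖ ^ 2 ≤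
      2 / R ^ 2 * Real.sqrt (∫ r in Set.Ioi R, r ^ 2 * ‖deriv u r‖ ^ 2) *
        Real.sqrt (∫ r in Set.Ioi R, r ^ 2 * ‖u r‖ ^ 2) := by
  intro r hr
  have hcont := hu.continuous
  have hcont' := hu.continuous_deriv le_rfl
  have hweighted (w : ℝ → ℂ) (hw : Continuous w) (hw_supp : HasCompactSupport w) :
      MemLp (fun t => t * ‖w t‖) 2 (volume.restrict (Ioi R)) :=
    ((continuous_id.mul hw.norm).memLp_of_hasCompactSupport hw_supp.norm.mul_left).restrict _
  have hnonneg (w : ℝ → ℂ) : 0 ≤ᵐ[volume.restrict (Ioi R)] fun t => t * ‖w t‖ :=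
    (ae_restrict_iff' measurableSet_Ioi).2 (.of_forall fun t ht =>
      mul_nonneg (hR.trans ht).le (norm_nonneg _))
  have hcs : ∫ t in Ioi R, t ^ 2 * (‖u t‖ * ‖deriv u t‖) ≤
      √(∫ t in Ioi R, t ^ 2 * ‖deriv u t‖ ^ 2) * √(∫ t in Ioi R, t ^ 2 * ‖u t‖ ^ 2) := by
    convert integral_mul_le_sqrt_integral_sq_mul_sqrt_integral_sq (hnonneg _) (hnonneg _)
      (hweighted _ hcont' hsupp.deriv) (hweighted _ hcont hsupp) using 3
    · ring
    all_goals simp only [mul_pow]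
  have hbound := hcont.norm.mul hcont'.norm
  calc ‖u r‖ ^ 2 ≤ 2 * ∫ t in Ioi r, ‖u t‖ * ‖deriv u t‖ :=
        norm_sq_le_two_mul_integral_Ioi_norm_mul_norm_deriv hu hsupp r
    _ ≤ 2 * ((∫ t in Ioi R, t ^ 2 * (‖u t‖ * ‖deriv u t‖)) / R ^ 2) := by
        gcongr
        exact setIntegral_Ioi_le_setIntegral_Ioi_sq_mul_div_sq hR (le_of_lt hr)
          (fun t _ => by positivity)
          (hbound.integrable_of_hasCompactSupport hsupp.norm.mul_right).integrableOn
          ((continuous_pow 2 |>.mul hbound).integrable_of_hasCompactSupport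
            (hsupp.norm.mul_right.mul_left)).integrableOn
    _ ≤ 2 * (√(∫ t in Ioi R, t ^ 2 * ‖deriv u t‖ ^ 2) *
          √(∫ t in Ioi R, t ^ 2 * ‖u t‖ ^ 2) / R ^ 2) := by gcongr
    _ = _ := by ring
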